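/- Suppose the differentiator error system ẋᵢ = x_{i+1} + φᵢ(t, x₁) (i = 1,…,n-1), ẋₙ = d(t) + φₙ(t, x₁), n ≥ 2, has an absolute deadline at T. Then for every δ > 0 there exists i ∈ {1,…,n} such that sup_{|x₁| ≤ δ, t ∈ [0,T)} |φᵢ(t, x₁)| = ∞. -/
import Mathlib


open Set Filter

lemma abs_coord_le_norm {n : ℕ} (v : EuclideanSpace ℝ (Fin n)) (i : Fin n) : |v i| ≤ ‖v‖ := by
  rw [EuclideanSpace.norm_eq]
  have h1 : |v i| ^ 2 ≤ ∑ j, ‖v j‖ ^ 2 := by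
    have := Finset.single_le_sum (f := fun j => ‖v j‖ ^ 2) (fun j _ => sq_nonneg _)
      (Finset.mem_univ i)
    simpa [Real.norm_eq_abs] using this
  calc |v i| = Real.sqrt (|v i| ^ 2) := by rw [Real.sqrt_sq (abs_nonneg _)]
  _ ≤ _ := Real.sqrt_le_sqrt h1

lemma mvt_bound {f f' : ℝ → ℝ} {a b C : ℝ} (hab : a ≤ b)
    (hd : ∀ τ ∈ Icc a b, HasDerivAt f (f' τ) τ)
    (hC : ∀ τ ∈ Icc a b, |f' τ| ≤ C) :
    ∀ τ ∈ Icc a b, |f τ - f a| ≤ C * (τ - a) := by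
  intro τ hτ
  have := (convex_Icc a b).norm_image_sub_le_of_norm_hasDerivWithin_le
    (fun y hy => (hd y hy).hasDerivWithinAt)
    (fun y hy => by simpa [Real.norm_eq_abs] using hC y hy)
    (left_mem_Icc.mpr hab) hτ
  simpa [Real.norm_eq_abs, abs_of_nonneg (sub_nonneg.mpr hτ.1)] using this


/-- A solution, on `[s,T)`, of the differentiator error system
    ẋᵢ = x_{i+1} + φᵢ(t, x₁ + η₁(t)) (i < n), ẋₙ = d(t) + φₙ(t, x₁ + η₁(t)). -/
def DiffSol (n : ℕ) (hn : 0 < n) (T : ℝ)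
    (φ : Fin n → ℝ → ℝ → ℝ) (d : ℝ → ℝ) (η₁ : ℝ → ℝ) (s : ℝ)
    (x : ℝ → EuclideanSpace ℝ (Fin n)) : Prop :=
  ∀ t ∈ Set.Ico s T,
    (∀ i : Fin n, ∀ h : (i : ℕ) + 1 < n,
      HasDerivAt (fun τ => x τ i)
        (x t ⟨(i : ℕ) + 1, h⟩ + φ i t (x t ⟨0, hn⟩ + η₁ t)) t) ∧
    HasDerivAt (fun τ => x τ ⟨n - 1, Nat.sub_lt hn one_pos⟩)
      (d t + φ ⟨n - 1, Nat.sub_lt hn one_pos⟩ t (x t ⟨0, hn⟩ + η₁ t)) t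

/-- Absolute deadline at `T` (with η₁ ≡ 0). -/
def DiffAbsDeadline (n : ℕ) (hn : 0 < n) (T : ℝ)
    (φ : Fin n → ℝ → ℝ → ℝ) (d : ℝ → ℝ) : Prop :=
  ∀ s ∈ Set.Ico (0:ℝ) T, ∀ x : ℝ → EuclideanSpace ℝ (Fin n),
    DiffSol n hn T φ d (fun _ => 0) s x →
    Filter.Tendsto x (nhdsWithin T (Set.Iio T)) (nhds 0)

set_option maxHeartbeats 2000000 in
/-- Theorem 2(iii): under an absolute deadline at `T`, for every
    δ > 0 some correction function φᵢ is unbounded on {(t,x₁) : |x₁| ≤ δ, t ∈ [0,T)}. -/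
theorem stmt9 (n : ℕ) (hn : 2 ≤ n) (T : ℝ) (hT : 0 < T)
    (φ : Fin n → ℝ → ℝ → ℝ) (d : ℝ → ℝ)
    (hex : ∀ s ∈ Set.Ico (0:ℝ) T, ∀ ξ : EuclideanSpace ℝ (Fin n),
      ∃ x : ℝ → EuclideanSpace ℝ (Fin n),
        DiffSol n (by omega) T φ d (fun _ => 0) s x ∧ x s = ξ)
    (habs : DiffAbsDeadline n (by omega) T φ d) :
    ∀ δ > (0:ℝ), ∃ i : Fin n, ∀ M : ℝ,
      ∃ t ∈ Set.Ico (0:ℝ) T, ∃ y : ℝ, |y| ≤ δ ∧ M < |φ i t y| := by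
  intro δ hδ
  by_contra hcon
  push_neg at hcon
  -- a uniform bound M0 ≥ 1 on all φ i over the strip
  choose Mf hMf using hcon
  set M0 : ℝ := 1 + ∑ i, max (Mf i) 0 with hM0def
  have hM0sum : ∀ i : Fin n, Mf i ≤ M0 := by
    intro i
    have h1 : max (Mf i) 0 ≤ ∑ j, max (Mf j) 0 :=
      Finset.single_le_sum (f := fun j => max (Mf j) 0) (fun j _ => le_max_right _ _)
        (Finset.mem_univ i)
    have := le_max_left (Mf i) 0
    simp only [hM0def]; linarith
  have hM01 : (1:ℝ) ≤ M0 := by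
    have : (0:ℝ) ≤ ∑ j, max (Mf j) 0 :=
      Finset.sum_nonneg fun j _ => le_max_right _ _
    simp only [hM0def]; linarith
  have hM0pos : (0:ℝ) < M0 := lt_of_lt_of_le one_pos hM01
  have hM : ∀ (i : Fin n) (t : ℝ), t ∈ Ico (0:ℝ) T → ∀ y : ℝ, |y| ≤ δ → |φ i t y| ≤ M0 := by
    intro i t ht y hy
    exact le_trans (hMf i t ht y hy) (hM0sum i)
  have hn0 : 0 < n := by omega
  set z0 : Fin n := ⟨0, hn0⟩ with hz0def
  set ε : ℝ := min 1 (δ / (16 * M0 * n)) with hεdef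
  have hεpos : 0 < ε := by
    apply lt_min one_pos
    positivity
  have hε1 : ε ≤ 1 := min_le_left _ _
  have hε2 : ε ≤ δ / (16 * M0 * n) := min_le_right _ _
  -- the zero solution
  obtain ⟨x0, sol0, -⟩ := hex 0 ⟨le_refl 0, hT⟩ 0
  have htend0 : Tendsto x0 (nhdsWithin T (Set.Iio T)) (nhds 0) :=
    habs 0 ⟨le_refl 0, hT⟩ x0 sol0
  have hev : {t | ‖x0 t‖ < δ/8} ∈ nhdsWithin T (Set.Iio T) := by
    have h1 : Tendsto (fun t => ‖x0 t‖) (nhdsWithin T (Set.Iio T)) (nhds 0) := by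
      simpa using htend0.norm
    exact h1.eventually_lt_const (by linarith)
  obtain ⟨a, haT, hsub⟩ := mem_nhdsLT_iff_exists_Ioo_subset.mp hev
  -- choose restart time s'
  set s' : ℝ := max ((a + T)/2) (max 0 (T - ε/2)) with hs'def
  have haT' : a < T := haT
  have hs'T : s' < T := by
    apply max_lt (by linarith) (max_lt hT (by linarith))
  have hs'0 : 0 ≤ s' := le_trans (le_max_left 0 (T - ε/2)) (le_max_right _ _)
  have hs'a : a < s' := lt_of_lt_of_le (by linarith) (le_max_left _ _)
  have hTs' : T - s' ≤ ε := by
    have : T - ε/2 ≤ s' := le_trans (le_max_right 0 _) (le_max_right _ _)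
    linarith
  have hx0small : ∀ t ∈ Ico s' T, ‖x0 t‖ ≤ δ/8 := by
    intro t ht
    exact le_of_lt (hsub ⟨lt_of_lt_of_le hs'a ht.1, ht.2⟩)
  -- the shifted solution
  obtain ⟨x, solx, hxs'⟩ := hex s' ⟨hs'0, hs'T⟩ (x0 s' + EuclideanSpace.single z0 (δ/2))
  have htendx : Tendsto x (nhdsWithin T (Set.Iio T)) (nhds 0) :=
    habs s' ⟨hs'0, hs'T⟩ x solx
  have hxinit : ∀ k : Fin n, x s' k = x0 s' k + if k = z0 then δ/2 else 0 := by
    intro k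
    rw [hxs']
    simp [EuclideanSpace.single_apply, PiLp.add_apply]
  -- the key in-strip estimate
  have hbound : ∀ t ∈ Ico s' T, (∀ τ ∈ Icc s' t, |x τ z0| ≤ δ) →
      |x t z0 - x0 t z0 - δ/2| ≤ δ/8 := by
    intro t ht hstrip
    have hts : s' ≤ t := ht.1
    have hsubI : ∀ τ ∈ Icc s' t, τ ∈ Ico s' T :=
      fun τ hτ => ⟨hτ.1, lt_of_le_of_lt hτ.2 ht.2⟩
    have hsubI0 : ∀ τ ∈ Icc s' t, τ ∈ Ico (0:ℝ) T :=
      fun τ hτ => ⟨le_trans hs'0 hτ.1, lt_of_le_of_lt hτ.2 ht.2⟩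
    have hτε : ∀ τ ∈ Icc s' t, τ - s' ≤ ε := fun τ hτ => by
      have := hτ.2; have := ht.2.le; linarith
    have hφx : ∀ (i : Fin n), ∀ τ ∈ Icc s' t, |φ i τ (x τ z0 + 0)| ≤ M0 := by
      intro i τ hτ
      apply hM i τ (hsubI0 τ hτ)
      rw [add_zero]; exact hstrip τ hτ
    have hφx0 : ∀ (i : Fin n), ∀ τ ∈ Icc s' t, |φ i τ (x0 τ z0 + 0)| ≤ M0 := by
      intro i τ hτ
      apply hM i τ (hsubI0 τ hτ)
      rw [add_zero]
      have := le_trans (abs_coord_le_norm (x0 τ) z0) (hx0small τ (hsubI τ hτ))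
      linarith
    -- chain of mean value bounds, from the top component down
    have key : ∀ m k : ℕ, 1 ≤ k → ∀ hk : k < n, k = n - 1 - m →
        ∀ τ ∈ Icc s' t, |x τ ⟨k, hk⟩ - x0 τ ⟨k, hk⟩| ≤ 2*M0*(m+1)*(τ - s') := by
      intro m
      induction m with
      | zero =>
        intro k hk1 hk hkm
        have hkn : k = n - 1 := by omega
        subst hkn
        have hder : ∀ τ' ∈ Icc s' t, HasDerivAt (fun u => x u ⟨n-1, hk⟩ - x0 u ⟨n-1, hk⟩)
            ((d τ' + φ ⟨n-1, hk⟩ τ' (x τ' z0 + 0)) - (d τ' + φ ⟨n-1, hk⟩ τ' (x0 τ' z0 + 0))) τ' := by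
          intro τ' hτ'
          have h1 : HasDerivAt (fun u => x u ⟨n-1, hk⟩)
              (d τ' + φ ⟨n-1, hk⟩ τ' (x τ' z0 + 0)) τ' := (solx τ' (hsubI τ' hτ')).2
          have h2 : HasDerivAt (fun u => x0 u ⟨n-1, hk⟩)
              (d τ' + φ ⟨n-1, hk⟩ τ' (x0 τ' z0 + 0)) τ' := (sol0 τ' (hsubI0 τ' hτ')).2
          exact h1.sub h2
        have hbnd : ∀ τ' ∈ Icc s' t,
            |(d τ' + φ ⟨n-1, hk⟩ τ' (x τ' z0 + 0)) - (d τ' + φ ⟨n-1, hk⟩ τ' (x0 τ' z0 + 0))| ≤ 2*M0 := by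
          intro τ' hτ'
          have h1 := hφx ⟨n-1, hk⟩ τ' hτ'
          have h2 := hφx0 ⟨n-1, hk⟩ τ' hτ'
          have heq : (d τ' + φ ⟨n-1, hk⟩ τ' (x τ' z0 + 0)) - (d τ' + φ ⟨n-1, hk⟩ τ' (x0 τ' z0 + 0))
              = φ ⟨n-1, hk⟩ τ' (x τ' z0 + 0) - φ ⟨n-1, hk⟩ τ' (x0 τ' z0 + 0) := by ring
          rw [heq]
          calc _ ≤ |φ ⟨n-1, hk⟩ τ' (x τ' z0 + 0)| + |φ ⟨n-1, hk⟩ τ' (x0 τ' z0 + 0)| := abs_sub _ _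
          _ ≤ 2*M0 := by linarith
        intro τ hτ
        have hmvt := mvt_bound hts hder hbnd τ hτ
        have hinit : x s' ⟨n-1, hk⟩ - x0 s' ⟨n-1, hk⟩ = 0 := by
          have := hxinit ⟨n-1, hk⟩
          rw [if_neg (by simp only [hz0def, Fin.mk.injEq]; omega)] at this
          rw [this]; ring
        rw [hinit, sub_zero] at hmvt
        have hτs : 0 ≤ τ - s' := by linarith [hτ.1]
        push_cast
        nlinarith [hM0pos]
      | succ m ih =>
        intro k hk1 hk hkm
        have hklt : k + 1 < n := by omega
        have ihb := ih (k+1) (by omega) hklt (by omega)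
        have hder : ∀ τ' ∈ Icc s' t, HasDerivAt (fun u => x u ⟨k, hk⟩ - x0 u ⟨k, hk⟩)
            ((x τ' ⟨k+1, hklt⟩ + φ ⟨k, hk⟩ τ' (x τ' z0 + 0))
              - (x0 τ' ⟨k+1, hklt⟩ + φ ⟨k, hk⟩ τ' (x0 τ' z0 + 0))) τ' := by
          intro τ' hτ'
          have h1 : HasDerivAt (fun u => x u ⟨k, hk⟩)
              (x τ' ⟨k+1, hklt⟩ + φ ⟨k, hk⟩ τ' (x τ' z0 + 0)) τ' :=
            (solx τ' (hsubI τ' hτ')).1 ⟨k, hk⟩ hklt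
          have h2 : HasDerivAt (fun u => x0 u ⟨k, hk⟩)
              (x0 τ' ⟨k+1, hklt⟩ + φ ⟨k, hk⟩ τ' (x0 τ' z0 + 0)) τ' :=
            (sol0 τ' (hsubI0 τ' hτ')).1 ⟨k, hk⟩ hklt
          exact h1.sub h2
        have hbnd : ∀ τ' ∈ Icc s' t,
            |(x τ' ⟨k+1, hklt⟩ + φ ⟨k, hk⟩ τ' (x τ' z0 + 0))
              - (x0 τ' ⟨k+1, hklt⟩ + φ ⟨k, hk⟩ τ' (x0 τ' z0 + 0))| ≤ 2*M0*(m+1) + 2*M0 := by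
          intro τ' hτ'
          have h1 := hφx ⟨k, hk⟩ τ' hτ'
          have h2 := hφx0 ⟨k, hk⟩ τ' hτ'
          have h3 := ihb τ' hτ'
          have h4 : τ' - s' ≤ ε := hτε τ' hτ'
          have h5 : (0:ℝ) ≤ 2*M0*(m+1) := by positivity
          have heq : (x τ' ⟨k+1, hklt⟩ + φ ⟨k, hk⟩ τ' (x τ' z0 + 0))
              - (x0 τ' ⟨k+1, hklt⟩ + φ ⟨k, hk⟩ τ' (x0 τ' z0 + 0))
              = (x τ' ⟨k+1, hklt⟩ - x0 τ' ⟨k+1, hklt⟩)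
                + (φ ⟨k, hk⟩ τ' (x τ' z0 + 0) - φ ⟨k, hk⟩ τ' (x0 τ' z0 + 0)) := by ring
          rw [heq]
          calc _ ≤ |x τ' ⟨k+1, hklt⟩ - x0 τ' ⟨k+1, hklt⟩|
                + |φ ⟨k, hk⟩ τ' (x τ' z0 + 0) - φ ⟨k, hk⟩ τ' (x0 τ' z0 + 0)| := abs_add_le _ _
          _ ≤ 2*M0*(m+1)*(τ' - s')
                + (|φ ⟨k, hk⟩ τ' (x τ' z0 + 0)| + |φ ⟨k, hk⟩ τ' (x0 τ' z0 + 0)|) := by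
              gcongr
              exact abs_sub _ _
          _ ≤ 2*M0*(m+1) + 2*M0 := by nlinarith [hε1]
        intro τ hτ
        have hmvt := mvt_bound hts hder hbnd τ hτ
        have hinit : x s' ⟨k, hk⟩ - x0 s' ⟨k, hk⟩ = 0 := by
          have := hxinit ⟨k, hk⟩
          rw [if_neg (by simp only [hz0def, Fin.mk.injEq]; omega)] at this
          rw [this]; ring
        rw [hinit, sub_zero] at hmvt
        push_cast at hmvt ⊢
        nlinarith [hτ.1]
    -- the first coordinate
    have h1lt : 1 < n := by omega
    have hkey1 := key (n-2) 1 (le_refl 1) h1lt (by omega)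
    have hder : ∀ τ' ∈ Icc s' t, HasDerivAt (fun u => x u z0 - x0 u z0)
        ((x τ' ⟨1, h1lt⟩ + φ z0 τ' (x τ' z0 + 0))
          - (x0 τ' ⟨1, h1lt⟩ + φ z0 τ' (x0 τ' z0 + 0))) τ' := by
      intro τ' hτ'
      have h1 : HasDerivAt (fun u => x u z0)
          (x τ' ⟨1, h1lt⟩ + φ z0 τ' (x τ' z0 + 0)) τ' :=
        (solx τ' (hsubI τ' hτ')).1 z0 (show 0+1 < n by omega)
      have h2 : HasDerivAt (fun u => x0 u z0)
          (x0 τ' ⟨1, h1lt⟩ + φ z0 τ' (x0 τ' z0 + 0)) τ' :=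
        (sol0 τ' (hsubI0 τ' hτ')).1 z0 (show 0+1 < n by omega)
      exact h1.sub h2
    have hbnd : ∀ τ' ∈ Icc s' t,
        |(x τ' ⟨1, h1lt⟩ + φ z0 τ' (x τ' z0 + 0))
          - (x0 τ' ⟨1, h1lt⟩ + φ z0 τ' (x0 τ' z0 + 0))| ≤ 2*M0*n := by
      intro τ' hτ'
      have h1 := hφx z0 τ' hτ'
      have h2 := hφx0 z0 τ' hτ'
      have h3 := hkey1 τ' hτ'
      have h4 : τ' - s' ≤ ε := hτε τ' hτ'
      have h5 : ((n:ℝ) - 2) + 1 = (n:ℝ) - 1 := by ring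
      have hcast : ((n - 2 : ℕ) : ℝ) = (n:ℝ) - 2 := by
        have : (2:ℕ) ≤ n := hn
        push_cast [Nat.cast_sub this]
        ring
      rw [hcast, h5] at h3
      have h6 : (0:ℝ) ≤ 2*M0*((n:ℝ)-1) := by
        have : (1:ℝ) ≤ (n:ℝ) := by exact_mod_cast Nat.one_le_of_lt h1lt
        nlinarith
      have heq : (x τ' ⟨1, h1lt⟩ + φ z0 τ' (x τ' z0 + 0))
          - (x0 τ' ⟨1, h1lt⟩ + φ z0 τ' (x0 τ' z0 + 0))
          = (x τ' ⟨1, h1lt⟩ - x0 τ' ⟨1, h1lt⟩)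
            + (φ z0 τ' (x τ' z0 + 0) - φ z0 τ' (x0 τ' z0 + 0)) := by ring
      rw [heq]
      calc _ ≤ |x τ' ⟨1, h1lt⟩ - x0 τ' ⟨1, h1lt⟩|
            + |φ z0 τ' (x τ' z0 + 0) - φ z0 τ' (x0 τ' z0 + 0)| := abs_add_le _ _
      _ ≤ 2*M0*((n:ℝ)-1)*(τ' - s')
            + (|φ z0 τ' (x τ' z0 + 0)| + |φ z0 τ' (x0 τ' z0 + 0)|) := by
          gcongr
          exact abs_sub _ _
      _ ≤ 2*M0*(n:ℝ) := by nlinarith [hε1]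
    have hmvt := mvt_bound hts hder hbnd t (right_mem_Icc.mpr hts)
    have hinit : x s' z0 - x0 s' z0 = δ/2 := by
      have := hxinit z0
      rw [if_pos rfl] at this
      rw [this]; ring
    rw [hinit] at hmvt
    have hεb : 2*M0*(n:ℝ)*ε ≤ δ/8 := by
      have hc : (0:ℝ) < 16 * M0 * n := by positivity
      have := (le_div_iff₀ hc).mp hε2
      nlinarith
    have htsε : t - s' ≤ ε := by linarith [ht.2.le]
    have h7 : (0:ℝ) ≤ 2*M0*(n:ℝ) := by positivity
    calc |x t z0 - x0 t z0 - δ/2| ≤ 2*M0*(n:ℝ)*(t - s') := hmvt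
    _ ≤ 2*M0*(n:ℝ)*ε := by nlinarith
    _ ≤ δ/8 := hεb
  have hgood : ∀ t ∈ Ico s' T, (∀ τ ∈ Icc s' t, |x τ z0| ≤ δ) →
      δ/4 ≤ x t z0 ∧ |x t z0| ≤ 3*δ/4 := by
    intro t ht hstrip
    have h1 := hbound t ht hstrip
    have h2 : |x0 t z0| ≤ δ/8 := le_trans (abs_coord_le_norm _ _) (hx0small t ht)
    have h3 := abs_le.mp h1
    have h4 := abs_le.mp h2
    constructor
    · linarith [h3.1, h4.1]
    · rw [abs_le]; constructor <;> linarith [h3.1, h3.2, h4.1, h4.2]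
  -- continuity of the first coordinate
  have hcont : ∀ t ∈ Ico s' T, ContinuousAt (fun τ => x τ z0) t := by
    intro t ht
    have := (solx t ht).1 z0 (show 0+1 < n by omega)
    exact this.continuousAt
  -- x never leaves the strip
  have hstay : ∀ t ∈ Ico s' T, |x t z0| ≤ 7*δ/8 := by
    by_contra hbad
    push_neg at hbad
    obtain ⟨t1, ht1, ht1v⟩ := hbad
    set B : Set ℝ := {τ | τ ∈ Ico s' T ∧ 7*δ/8 < |x τ z0|} with hBdef
    have hBne : B.Nonempty := ⟨t1, ht1, ht1v⟩
    have hBbdd : BddBelow B := ⟨s', fun b hb => hb.1.1⟩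
    set t0 := sInf B with ht0def
    have ht0ge : s' ≤ t0 := le_csInf hBne (fun b hb => hb.1.1)
    obtain ⟨b0, hb0⟩ := hBne
    have ht0lt : t0 < T := lt_of_le_of_lt (csInf_le hBbdd hb0) hb0.1.2
    have hpre : ∀ τ ∈ Ico s' t0, |x τ z0| ≤ 7*δ/8 := by
      intro τ hτ
      by_contra hc
      push_neg at hc
      have hmem : τ ∈ B := ⟨⟨hτ.1, lt_trans hτ.2 ht0lt⟩, hc⟩
      exact absurd (csInf_le hBbdd hmem) (not_le.mpr hτ.2)
    have hval : |x t0 z0| ≤ 3*δ/4 := by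
      rcases eq_or_lt_of_le ht0ge with heq | hlt
      · rw [← heq]
        have h0 := hxinit z0
        rw [if_pos rfl] at h0
        have h2 : |x0 s' z0| ≤ δ/8 :=
          le_trans (abs_coord_le_norm _ _) (hx0small s' ⟨le_refl _, hs'T⟩)
        rw [h0]
        have := abs_le.mp h2
        rw [abs_le]
        constructor <;> linarith [this.1, this.2]
      · have hIoo : ∀ τ ∈ Ico s' t0, |x τ z0| ≤ 3*δ/4 := by
          intro τ hτ
          refine (hgood τ ⟨hτ.1, lt_trans hτ.2 ht0lt⟩ ?_).2
          intro σ hσ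
          have := hpre σ ⟨hσ.1, lt_of_le_of_lt hσ.2 hτ.2⟩
          linarith
        have hct : Tendsto (fun τ => |x τ z0|) (nhdsWithin t0 (Iio t0)) (nhds |x t0 z0|) :=
          ((hcont t0 ⟨ht0ge, ht0lt⟩).tendsto.abs).mono_left nhdsWithin_le_nhds
        have hev' : ∀ᶠ τ in nhdsWithin t0 (Iio t0), |x τ z0| ≤ 3*δ/4 := by
          filter_upwards [Ioo_mem_nhdsLT hlt] with τ hτ
          exact hIoo τ ⟨le_of_lt hτ.1, hτ.2⟩
        haveI : (nhdsWithin t0 (Iio t0)).NeBot := nhdsLT_neBot t0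
        exact le_of_tendsto hct hev'
    have hlt78 : |x t0 z0| < 7*δ/8 := by linarith
    have hevn : ∀ᶠ τ in nhds t0, |x τ z0| < 7*δ/8 :=
      ((hcont t0 ⟨ht0ge, ht0lt⟩).tendsto.abs).eventually_lt_const hlt78
    obtain ⟨r, hr, hball⟩ := Metric.eventually_nhds_iff.mp hevn
    have hinf : sInf B < t0 + r := by
      rw [← ht0def]; linarith
    obtain ⟨b, hbB, hbr⟩ := exists_lt_of_csInf_lt ⟨b0, hb0⟩ hinf
    have hbge : t0 ≤ b := csInf_le hBbdd hbB
    have hdist : dist b t0 < r := by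
      rw [Real.dist_eq, abs_of_nonneg (by linarith)]
      linarith
    exact absurd hbB.2 (not_lt.mpr (le_of_lt (hball hdist)))
  -- hence x₁ ≥ δ/4 forever
  have hfinal : ∀ t ∈ Ico s' T, δ/4 ≤ x t z0 := by
    intro t ht
    exact (hgood t ht (fun τ hτ => by
      have hτ' : τ ∈ Ico s' T := ⟨hτ.1, lt_of_le_of_lt hτ.2 ht.2⟩
      linarith [hstay τ hτ'])).1
  -- contradiction with x → 0
  have h1 : Tendsto (fun t => ‖x t‖) (nhdsWithin T (Set.Iio T)) (nhds 0) := by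
    simpa using htendx.norm
  have h2 : ∀ᶠ t in nhdsWithin T (Set.Iio T), ‖x t‖ < δ/4 :=
    h1.eventually_lt_const (by linarith)
  have h3 : ∀ᶠ t in nhdsWithin T (Set.Iio T), t ∈ Ioo s' T :=
    Ioo_mem_nhdsLT hs'T
  have : NeBot (nhdsWithin T (Set.Iio T)) := by
    exact nhdsLT_neBot T
  obtain ⟨t, ht1, ht2⟩ := (h2.and h3).exists
  have h5 := hfinal t ⟨le_of_lt ht2.1, ht2.2⟩
  have h6 : |x t z0| ≤ ‖x t‖ := abs_coord_le_norm _ _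
  have h7 : x t z0 ≤ |x t z0| := le_abs_self _
  linarith
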